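/- Let v be a MacLane valuation. For any monic non-constant g ∈ K[x] of degree deg g ≤ deg v one has v(g) ≤ λ_v, and v(g) = λ_v is possible only if deg g = deg v. -/

import Mathlib

open Polynomial
open scoped Classical

noncomputable section

/-- The value monoid `ℚ ∪ {∞}`. -/
abbrev Qinf : Type := WithTop ℚ

/-- A pseudo-valuation on a commutative ring `A`, with values in `ℚ ∪ {∞}`:
`v (a*b) = v a + v b` and `v (a+b) ≥ min (v a) (v b)`. -/
structure IsPseudoVal {A : Type*} [CommRing A] (v : A → Qinf) : Prop where
  map_mul : ∀ a b : A, v (a * b) = v a + v b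
  min_le_map_add : ∀ a b : A, min (v a) (v b) ≤ v (a + b)

variable {K : Type*} [Field K]

/-- `vK` is a normalised discrete valuation on the field `K`. -/
structure IsNormDiscreteVal (vK : K → Qinf) : Prop where
  pseudo : IsPseudoVal vK
  top_iff : ∀ a : K, vK a = ⊤ ↔ a = 0
  int_valued : ∀ a : K, a ≠ 0 → ∃ n : ℤ, vK a = ((n : ℚ) : Qinf)
  normalised : ∃ π : K, vK π = ((1 : ℚ) : Qinf)

/-- `K` is complete with respect to the valuation `vK`:
every Cauchy sequence (for `vK`) converges. -/
def IsCompleteVal (vK : K → Qinf) : Prop :=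
  ∀ s : ℕ → K,
    (∀ M : ℚ, ∃ N : ℕ, ∀ m, N ≤ m → ∀ n, N ≤ n → ((M : ℚ) : Qinf) ≤ vK (s m - s n)) →
    ∃ a : K, ∀ M : ℚ, ∃ N : ℕ, ∀ n, N ≤ n → ((M : ℚ) : Qinf) ≤ vK (s n - a)

/-- The Gauss valuation on `K[x]`: `v₀ (∑ aᵢ xⁱ) = minᵢ vK aᵢ`. -/
def gaussVal (vK : K → Qinf) (g : Polynomial K) : Qinf :=
  g.support.inf fun i => vK (g.coeff i)

/-- `g ≈_v h` : `g` is `v`-equivalent to `h`, i.e. `v (g - h) > v g`. -/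
def VEquiv (v : Polynomial K → Qinf) (g h : Polynomial K) : Prop :=
  v g < v (g - h)

/-- `h |_v g` : `g` is `v`-divisible by `h`, i.e. `g ≈_v q * h` for some `q`. -/
def VDvd (v : Polynomial K → Qinf) (h g : Polynomial K) : Prop :=
  ∃ q : Polynomial K, VEquiv v g (q * h)

/-- `φ` is `v`-irreducible. -/
def VIrreducible (v : Polynomial K → Qinf) (φ : Polynomial K) : Prop :=
  ∀ a b : Polynomial K, VDvd v φ (a * b) → VDvd v φ a ∨ VDvd v φ b

/-- `φ` is `v`-minimal: whatever `φ` `v`-divides has degree at least `deg φ`. -/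
def VMinimal (v : Polynomial K → Qinf) (φ : Polynomial K) : Prop :=
  ∀ a : Polynomial K, VDvd v φ a → φ.natDegree ≤ a.natDegree

/-- `φ` is a key polynomial over `v`. -/
def IsKeyPoly (v : Polynomial K → Qinf) (φ : Polynomial K) : Prop :=
  φ.Monic ∧ VIrreducible v φ ∧ VMinimal v φ

/-- Auxiliary fuelled definition of the augmented pseudo-valuation. -/
def augValAux (v : Polynomial K → Qinf) (φ : Polynomial K) (lam : Qinf) :
    ℕ → Polynomial K → Qinf
  | 0, _ => ⊤
  | n + 1, g =>
      if g = 0 then ⊤ else min (v (g %ₘ φ)) (lam + augValAux v φ lam n (g /ₘ φ))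

/-- The augmentation `w = [v, w(φ) = λ]`, defined by
`w (∑ aᵢ φ^i) = minᵢ (v aᵢ + i•λ)` on `φ`-adic expansions with `deg aᵢ < deg φ`. -/
def augVal (v : Polynomial K → Qinf) (φ : Polynomial K) (lam : Qinf)
    (g : Polynomial K) : Qinf :=
  augValAux v φ lam (g.natDegree + 1) g

/-- MacLane pseudo-valuations on `K[x]`: obtained from the Gauss valuation by
finitely many augmentations by key polynomials. -/
inductive IsMacLane (vK : K → Qinf) : (Polynomial K → Qinf) → Prop
  | gauss : IsMacLane vK (gaussVal vK)
  | aug {v : Polynomial K → Qinf} {φ : Polynomial K} {lam : Qinf} :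
      IsMacLane vK v → IsKeyPoly v φ → v φ < lam → IsMacLane vK (augVal v φ lam)

/-- MacLane valuations: MacLane pseudo-valuations which are valuations. -/
def IsMacLaneVal (vK : K → Qinf) (v : Polynomial K → Qinf) : Prop :=
  IsMacLane vK v ∧ ∀ g : Polynomial K, v g = ⊤ → g = 0

/-- `φ` is a centre of the MacLane pseudo-valuation `w`: the last key polynomial of
an augmentation chain for `w` (for the Gauss valuation: any monic integral degree 1
polynomial). -/
def IsCentre (vK : K → Qinf) (w : Polynomial K → Qinf) (φ : Polynomial K) : Prop :=
  (w = gaussVal vK ∧ φ.Monic ∧ φ.natDegree = 1 ∧ ∀ i : ℕ, 0 ≤ vK (φ.coeff i)) ∨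
  ∃ (v : Polynomial K → Qinf) (lam : Qinf),
    IsMacLane vK v ∧ IsKeyPoly v φ ∧ v φ < lam ∧ w = augVal v φ lam

/-- `r` is the radius `λ_w` of the MacLane pseudo-valuation `w`. -/
def HasRadius (vK : K → Qinf) (w : Polynomial K → Qinf) (r : Qinf) : Prop :=
  (w = gaussVal vK ∧ r = 0) ∨
  ∃ (v : Polynomial K → Qinf) (φ : Polynomial K),
    IsMacLane vK v ∧ IsKeyPoly v φ ∧ v φ < r ∧ w = augVal v φ r

/-- `d` is the degree `deg w` of the MacLane pseudo-valuation `w`. -/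
def HasMLDegree (vK : K → Qinf) (w : Polynomial K → Qinf) (d : ℕ) : Prop :=
  (w = gaussVal vK ∧ d = 1) ∨
  ∃ (v : Polynomial K → Qinf) (φ : Polynomial K) (lam : Qinf),
    IsMacLane vK v ∧ IsKeyPoly v φ ∧ v φ < lam ∧ w = augVal v φ lam ∧
      φ.natDegree = d

variable {Kb : Type*} [Field Kb] [Algebra K Kb]

/-- `vbar` is an extension of `vK` to `Kb`. -/
structure IsExtVal (vK : K → Qinf) (vbar : Kb → Qinf) : Prop where
  pseudo : IsPseudoVal vbar
  top_iff : ∀ a : Kb, vbar a = ⊤ ↔ a = 0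
  extends_vK : ∀ a : K, vbar (algebraMap K Kb a) = vK a

/-- The discoid `D(g, λ) = {α : v_K(g(α)) ≥ λ}`. -/
def discoidSet (vbar : Kb → Qinf) (g : Polynomial K) (lam : Qinf) : Set Kb :=
  {α : Kb | lam ≤ vbar (Polynomial.aeval α g)}

/-- `D` is a discoid: `D = D(g, λ)` for some monic irreducible `g` and some `λ`. -/
def IsDiscoid (vbar : Kb → Qinf) (D : Set Kb) : Prop :=
  ∃ (g : Polynomial K) (lam : Qinf), g.Monic ∧ Irreducible g ∧
    D = discoidSet vbar g lam

/-- The set `D_v = {α : v_K(g(α)) ≥ v g for all g}` associated to `v`. -/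
def Dset (vbar : Kb → Qinf) (v : Polynomial K → Qinf) : Set Kb :=
  {α : Kb | ∀ g : Polynomial K, v g ≤ vbar (Polynomial.aeval α g)}

/-- The set of roots of `f` in `Kb`. -/
def rootSetOf (f : Polynomial K) : Set Kb :=
  {α : Kb | Polynomial.aeval α f = 0}

/-- `(s, v)` is a MacLane cluster for `f`. -/
def IsMLCluster (vK : K → Qinf) (vbar : Kb → Qinf) (f : Polynomial K)
    (s : Set Kb) (v : Polynomial K → Qinf) : Prop :=
  IsMacLane vK v ∧ s.Nonempty ∧ s = Dset vbar v ∩ rootSetOf f ∧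
  ∀ w : Polynomial K → Qinf, IsMacLane vK w → v < w →
    s = Dset vbar w ∩ rootSetOf f →
    ∀ dv dw : ℕ, HasMLDegree vK v dv → HasMLDegree vK w dw → dv < dw

/-- The `i`-th coefficient `aᵢ` of the `φ`-adic expansion `g = ∑ aᵢ φ^i`. -/
def phiCoeff (φ : Polynomial K) : ℕ → Polynomial K → Polynomial K
  | 0, g => g %ₘ φ
  | n + 1, g => phiCoeff φ n (g /ₘ φ)

/-- The right endpoint `i_w` of `L_w(f)`, for `w = [v, w(φ) = λ]`. -/
def iEnd (v : Polynomial K → Qinf) (φ : Polynomial K) (lam : Qinf)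
    (f : Polynomial K) : ℕ :=
  if lam = ⊤ then sInf {i : ℕ | phiCoeff φ i f ≠ 0}
  else sSup {i : ℕ | v (phiCoeff φ i f) + i • lam = augVal v φ lam f}

/-- The left endpoint `i⁰_w` of `L_w(f)`, for `w = [v, w(φ) = λ]`. -/
def iStart (v : Polynomial K → Qinf) (φ : Polynomial K) (lam : Qinf)
    (f : Polynomial K) : ℕ :=
  if lam = ⊤ then 0
  else sInf {i : ℕ | v (phiCoeff φ i f) + i • lam = augVal v φ lam f}

end

/-!
Every MacLane pseudo-valuation `v` has, in each degree `m`, a monic polynomial of degree `m`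
maximising `v` among monic polynomials of degree `≤ m`: for the Gauss valuation take `X ^ m`, and
for `w = [v, w(φ) = λ]` take `φ ^ k * u` with `m = k deg φ + r` and `u` a `v`-maximiser of
degree `r`. Key polynomials are `v`-maximisers of their own degree (a monic `h` of the same
degree with `v h > v φ` would make `φ` `v`-divide `φ - h`, of smaller degree). Hence if
`v = [v', v(φ) = λ]`, a monic `g` with `deg g < deg φ` has `v g = v' g ≤ v' φ < λ`, and one with
`deg g = deg φ` has `v g ≤ v φ = λ`.

The degree of a chain does not depend on the chain: if `v = [v₁, v(φ₁) = λ₁] = [v₂, v(φ₂) = λ₂]`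
with `deg φ₁ < deg φ₂`, the `v`-maximiser `h = φ₁ ^ k * u` of degree `deg φ₂` satisfies
`v₂ (h - φ₂) = v (h - φ₂) ≥ λ₂ > v₂ φ₂`, so `φ₂` `v₂`-divides `φ₁ ^ k * u`; by
`v₂`-irreducibility it divides `φ₁` or `u`, both of degree `< deg φ₂`, against `v₂`-minimality.
-/

section

variable {K : Type*} [Field K]

namespace IsNormDiscreteVal

variable {vK : K → Qinf} (hK : IsNormDiscreteVal vK)
include hK

lemma map_one : vK 1 = 0 := by
  have h : vK 1 + vK 1 = vK 1 := by rw [← hK.pseudo.map_mul, one_mul]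
  lift vK 1 to ℚ using fun h1 => one_ne_zero ((hK.top_iff 1).mp h1) with q
  norm_cast at h ⊢
  linarith

def toAddValuation : AddValuation K Qinf :=
  AddValuation.of vK ((hK.top_iff 0).mpr rfl) hK.map_one hK.pseudo.min_le_map_add
    hK.pseudo.map_mul

lemma min_le_map_sub (a b : K) : min (vK a) (vK b) ≤ vK (a - b) :=
  hK.toAddValuation.map_sub a b

end IsNormDiscreteVal

structure IsUltrametric {A Γ : Type*} [AddGroup A] [LinearOrder Γ] [OrderTop Γ] (v : A → Γ) :
    Prop where
  map_zero : v 0 = ⊤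
  min_le_map_sub : ∀ a b : A, min (v a) (v b) ≤ v (a - b)

namespace IsUltrametric

variable {A Γ : Type*} [AddGroup A] [LinearOrder Γ] [OrderTop Γ] {v : A → Γ}
  (hv : IsUltrametric v)
include hv

lemma le_map_neg (a : A) : v a ≤ v (-a) := by
  simpa [hv.map_zero] using hv.min_le_map_sub 0 a

lemma map_neg (a : A) : v (-a) = v a :=
  le_antisymm (by simpa using hv.le_map_neg (-a)) (hv.le_map_neg a)

lemma min_le_map_add (a b : A) : min (v a) (v b) ≤ v (a + b) := by
  simpa [hv.map_neg] using hv.min_le_map_sub a (-b)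

lemma map_add_eq_of_lt {a b : A} (h : v a < v b) : v (a + b) = v a := by
  refine le_antisymm ?_ (min_eq_left h.le ▸ hv.min_le_map_add a b)
  by_contra! hlt
  have := hv.min_le_map_sub (a + b) b
  rw [add_sub_cancel_right] at this
  exact (lt_min hlt h).not_ge this

lemma map_sub_eq_of_lt {a b : A} (h : v a < v b) : v (a - b) = v a := by
  rw [sub_eq_add_neg]
  exact hv.map_add_eq_of_lt (hv.map_neg b ▸ h)

end IsUltrametric

section Gauss

variable {vK : K → Qinf} (hK : IsNormDiscreteVal vK)
include hK

lemma gaussVal_le_coeff (g : K[X]) (i : ℕ) : gaussVal vK g ≤ vK (g.coeff i) := by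
  by_cases hi : i ∈ g.support
  · exact Finset.inf_le hi
  · rw [notMem_support_iff.mp hi, (hK.top_iff 0).mpr rfl]
    exact le_top

lemma gaussVal_isUltrametric : IsUltrametric (gaussVal vK) where
  map_zero := by simp [gaussVal]
  min_le_map_sub a b := Finset.le_inf fun i _ => by
    rw [coeff_sub]
    exact (min_le_min (gaussVal_le_coeff hK a i) (gaussVal_le_coeff hK b i)).trans
      (hK.min_le_map_sub _ _)

lemma gaussVal_le_zero_of_monic {g : K[X]} (hg : g.Monic) : gaussVal vK g ≤ 0 := by
  simpa [hg.coeff_natDegree, hK.map_one] using gaussVal_le_coeff hK g g.natDegree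

lemma gaussVal_X_pow (m : ℕ) : gaussVal vK ((X : K[X]) ^ m) = 0 := by
  simp [gaussVal, support_X_pow, hK.map_one]

end Gauss

namespace Polynomial

variable {R : Type*} [CommRing R] [Nontrivial R] {p q φ : R[X]}

lemma sub_divByMonic (hφ : φ.Monic) (p₁ p₂ : R[X]) : (p₁ - p₂) /ₘ φ = p₁ /ₘ φ - p₂ /ₘ φ :=
  (div_modByMonic_unique (p₁ /ₘ φ - p₂ /ₘ φ) (p₁ %ₘ φ - p₂ %ₘ φ) hφ
    ⟨by linear_combination modByMonic_add_div p₁ φ - modByMonic_add_div p₂ φ,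
      (degree_sub_le _ _).trans_lt
        (max_lt (degree_modByMonic_lt _ hφ) (degree_modByMonic_lt _ hφ))⟩).1

lemma Monic.divByMonic (hp : p.Monic) (hφ : φ.Monic) (h : φ.natDegree ≤ p.natDegree) :
    (p /ₘ φ).Monic := by
  rw [Monic, leadingCoeff_divByMonic_of_monic hφ, hp.leadingCoeff]
  rw [degree_eq_natDegree hφ.ne_zero, degree_eq_natDegree hp.ne_zero]
  exact_mod_cast h

lemma Monic.degree_sub_lt (hp : p.Monic) (hq : q.Monic) (h : p.natDegree = q.natDegree) :
    (p - q).degree < q.degree := by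
  refine degree_sub_lt_right ?_ hq.ne_zero (by rw [hp.leadingCoeff, hq.leadingCoeff])
  rw [degree_eq_natDegree hp.ne_zero, degree_eq_natDegree hq.ne_zero, h]

lemma natDegree_divByMonic_lt (hφ : φ.Monic) (he : 0 < φ.natDegree) (hq : p /ₘ φ ≠ 0) :
    (p /ₘ φ).natDegree < p.natDegree := by
  have hp : p ≠ 0 := by rintro rfl; exact hq (zero_divByMonic φ)
  exact natDegree_lt_natDegree hq (degree_divByMonic_lt p φ hp
    (by rw [degree_eq_natDegree hφ.ne_zero]; exact_mod_cast he))

end Polynomial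

section Augmentation

variable (v : K[X] → Qinf) {φ : K[X]} (lam : Qinf)

lemma augValAux_zero_right : ∀ n, augValAux v φ lam n 0 = ⊤
  | 0 => rfl
  | _ + 1 => if_pos rfl

lemma augVal_zero : augVal v φ lam 0 = ⊤ :=
  augValAux_zero_right v lam _

variable {v} (hφ : φ.Monic)
include hφ

lemma augValAux_eq_of_natDegree_lt (he : 0 < φ.natDegree) :
    ∀ {n m : ℕ} {g : K[X]}, g.natDegree < n → g.natDegree < m →
      augValAux v φ lam n g = augValAux v φ lam m g
  | 0, _, _, hn, _ => absurd hn (Nat.not_lt_zero _)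
  | _, 0, _, _, hm => absurd hm (Nat.not_lt_zero _)
  | n + 1, m + 1, g, hn, hm => by
    simp only [augValAux]
    split_ifs
    · rfl
    by_cases hq : g /ₘ φ = 0
    · rw [hq, augValAux_zero_right, augValAux_zero_right]
    have := natDegree_divByMonic_lt hφ he hq
    rw [augValAux_eq_of_natDegree_lt he (n := n) (m := m) (by omega) (by omega)]

lemma augVal_eq_min (hv0 : v 0 = ⊤) (he : 0 < φ.natDegree) (g : K[X]) :
    augVal v φ lam g = min (v (g %ₘ φ)) (lam + augVal v φ lam (g /ₘ φ)) := by
  by_cases hg : g = 0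
  · simp [hg, augVal_zero, hv0]
  rw [augVal, augValAux, if_neg hg]
  by_cases hq : g /ₘ φ = 0
  · rw [hq, augVal_zero, augValAux_zero_right]
  rw [augVal, augValAux_eq_of_natDegree_lt lam hφ he (natDegree_divByMonic_lt hφ he hq)
    (Nat.lt_succ_self _)]

lemma augVal_of_degree_lt (hv0 : v 0 = ⊤) (he : 0 < φ.natDegree) {g : K[X]}
    (hg : g.degree < φ.degree) : augVal v φ lam g = v g := by
  rw [augVal_eq_min lam hφ hv0 he, (modByMonic_eq_self_iff hφ).mpr hg,
    (divByMonic_eq_zero_iff hφ).mpr hg, augVal_zero, add_top, min_top_right]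

lemma augVal_pow_mul (hv0 : v 0 = ⊤) (he : 0 < φ.natDegree) {u : K[X]}
    (hu : u.degree < φ.degree) (k : ℕ) : augVal v φ lam (φ ^ k * u) = k • lam + v u := by
  induction k with
  | zero => rw [pow_zero, one_mul, zero_smul, zero_add, augVal_of_degree_lt lam hφ hv0 he hu]
  | succ k ih =>
    rw [augVal_eq_min lam hφ hv0 he, pow_succ', mul_assoc, self_mul_modByMonic hφ,
      mul_divByMonic_cancel_left _ hφ, hv0, ih, min_top_left, succ_nsmul', add_assoc]

lemma augVal_eq_top_of_natDegree_eq_zero (hv0 : v 0 = ⊤) (he : φ.natDegree = 0) :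
    augVal v φ lam = ⊤ := by
  obtain rfl := hφ.natDegree_eq_zero.mp he
  funext g
  suffices ∀ n g, augValAux v 1 lam n g = ⊤ from this _ g
  intro n
  induction n with
  | zero => exact fun _ => rfl
  | succ n ih => intro g; simp [augValAux, hv0, ih]

lemma isUltrametric_augVal (hv : IsUltrametric v) (he : 0 < φ.natDegree) :
    IsUltrametric (augVal v φ lam) := by
  refine ⟨augVal_zero v lam, fun a b => ?_⟩
  induction hk : a.natDegree + b.natDegree using Nat.strong_induction_on generalizing a b with
  | _ k ih =>
    rw [augVal_eq_min lam hφ hv.map_zero he a, augVal_eq_min lam hφ hv.map_zero he b,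
      augVal_eq_min lam hφ hv.map_zero he (a - b), sub_modByMonic, sub_divByMonic hφ]
    have hquot : min (augVal v φ lam (a /ₘ φ)) (augVal v φ lam (b /ₘ φ)) ≤
        augVal v φ lam (a /ₘ φ - b /ₘ φ) := by
      by_cases hq : a /ₘ φ = 0 ∧ b /ₘ φ = 0
      · rw [hq.1, hq.2, sub_zero, augVal_zero]
        exact le_top
      refine ih _ ?_ _ _ rfl
      have ha := natDegree_divByMonic a hφ
      have hb := natDegree_divByMonic b hφ
      rcases not_and_or.mp hq with hq | hq
      · have := natDegree_divByMonic_lt hφ he hq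
        omega
      · have := natDegree_divByMonic_lt hφ he hq
        omega
    refine le_min ?_ ?_
    · exact (min_le_min (min_le_left _ _) (min_le_left _ _)).trans (hv.min_le_map_sub _ _)
    · refine (min_le_min (min_le_right _ _) (min_le_right _ _)).trans ?_
      rw [min_add_add_left]
      exact add_le_add_right hquot lam

end Augmentation

section KeyPolynomial

variable {v : K[X] → Qinf} {φ : K[X]}

lemma IsUltrametric.vDvd_of_lt_map_sub (hv : IsUltrametric v) {h : K[X]}
    (hlt : v φ < v (h - φ)) : VDvd v φ h := by
  refine ⟨1, ?_⟩
  have hh : v h = v φ := by simpa using hv.map_add_eq_of_lt hlt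
  rwa [VEquiv, one_mul, hh]

lemma VIrreducible.vDvd_pow_mul (hirr : VIrreducible v φ) {ψ u : K[X]} :
    ∀ {k : ℕ}, VDvd v φ (ψ ^ k * u) → VDvd v φ ψ ∨ VDvd v φ u
  | 0, h => Or.inr (by rwa [pow_zero, one_mul] at h)
  | k + 1, h => by
    rw [pow_succ', mul_assoc] at h
    exact (hirr _ _ h).elim Or.inl hirr.vDvd_pow_mul

lemma IsKeyPoly.le_of_natDegree_eq (hkey : IsKeyPoly v φ) (hv : IsUltrametric v) {h : K[X]}
    (hh : h.Monic) (hd : h.natDegree = φ.natDegree) : v h ≤ v φ := by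
  by_contra! hlt
  have hdvd : VDvd v φ (φ - h) := ⟨1, by
    rwa [VEquiv, one_mul, sub_sub_cancel_left, hv.map_neg, hv.map_sub_eq_of_lt hlt]⟩
  have hne : φ - h ≠ 0 := sub_ne_zero.mpr (by rintro rfl; exact hlt.false)
  have hlow := natDegree_lt_natDegree hne (hkey.1.degree_sub_lt hh hd.symm)
  have := hkey.2.2 _ hdvd
  omega

end KeyPolynomial

def IsMonicMaximizer (v : K[X] → Qinf) (u : K[X]) : Prop :=
  u.Monic ∧ ∀ g : K[X], g.Monic → g.natDegree ≤ u.natDegree → v g ≤ v u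

def HasMonicMaximizers (v : K[X] → Qinf) : Prop :=
  ∀ m : ℕ, ∃ u : K[X], u.natDegree = m ∧ IsMonicMaximizer v u

lemma isMonicMaximizer_one (v : K[X] → Qinf) : IsMonicMaximizer v 1 :=
  ⟨monic_one, fun g hg hd => by rw [hg.natDegree_eq_zero.mp (by simpa using hd)]⟩

lemma IsKeyPoly.le_of_natDegree_le {v : K[X] → Qinf} {φ : K[X]} (hkey : IsKeyPoly v φ)
    (hv : IsUltrametric v) (hmax : HasMonicMaximizers v) {g : K[X]} (hg : g.Monic)
    (hd : g.natDegree ≤ φ.natDegree) : v g ≤ v φ := by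
  obtain ⟨u, hud, hu⟩ := hmax φ.natDegree
  exact (hu.2 g hg (hud ▸ hd)).trans (hkey.le_of_natDegree_eq hv hu.1 hud)

section AugmentationMaximizers

variable {v : K[X] → Qinf} {φ : K[X]} {lam : Qinf} (hv : IsUltrametric v)
  (hmax : HasMonicMaximizers v) (hkey : IsKeyPoly v φ) (hlt : v φ < lam)
  (he : 0 < φ.natDegree) (hv1 : v 1 = 0)
include hv hmax hkey hlt he hv1

lemma augVal_le_of_isMonicMaximizer {u : K[X]} (hu : IsMonicMaximizer v u)
    (hud : u.natDegree < φ.natDegree) (k : ℕ) {g : K[X]} (hg : g.Monic)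
    (hgd : g.natDegree ≤ k * φ.natDegree + u.natDegree) : augVal v φ lam g ≤ k • lam + v u := by
  induction k generalizing g with
  | zero =>
    rw [zero_mul, zero_add] at hgd
    rw [zero_smul, zero_add,
      augVal_of_degree_lt lam hkey.1 hv.map_zero he (degree_lt_degree (hgd.trans_lt hud))]
    exact hu.2 g hg hgd
  | succ k ih =>
    by_cases hge : φ.natDegree ≤ g.natDegree
    · have hquot := ih (hg.divByMonic hkey.1 hge) (by
        rw [natDegree_divByMonic _ hkey.1]
        rw [add_one_mul] at hgd
        omega)
      calc augVal v φ lam g ≤ lam + augVal v φ lam (g /ₘ φ) :=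
            (augVal_eq_min lam hkey.1 hv.map_zero he g).trans_le (min_le_right _ _)
        _ ≤ lam + (k • lam + v u) := add_le_add_right hquot lam
        _ = (k + 1) • lam + v u := by rw [succ_nsmul', add_assoc]
    · have h0u : 0 ≤ v u := hv1 ▸ hu.2 1 monic_one (by simp)
      have h0lam : 0 ≤ lam :=
        (hv1 ▸ hkey.le_of_natDegree_le hv hmax monic_one (by simp)).trans hlt.le
      calc augVal v φ lam g = v g :=
            augVal_of_degree_lt lam hkey.1 hv.map_zero he (degree_lt_degree (by omega))
        _ ≤ v φ := hkey.le_of_natDegree_le hv hmax hg (by omega)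
        _ ≤ lam := hlt.le
        _ ≤ (k + 1) • lam + v u := by
          rw [succ_nsmul]
          exact le_add_of_le_of_nonneg (le_add_of_nonneg_left (nsmul_nonneg h0lam k)) h0u

lemma hasMonicMaximizers_augVal : HasMonicMaximizers (augVal v φ lam) := by
  intro m
  obtain ⟨u, hud, hu⟩ := hmax (m % φ.natDegree)
  have hdeg : (φ ^ (m / φ.natDegree) * u).natDegree = m := by
    rw [(hkey.1.pow _).natDegree_mul hu.1, hkey.1.natDegree_pow, hud, Nat.div_add_mod']
  refine ⟨_, hdeg, (hkey.1.pow _).mul hu.1, fun g hg hgd => ?_⟩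
  have hud' : u.natDegree < φ.natDegree := hud ▸ Nat.mod_lt _ he
  rw [augVal_pow_mul lam hkey.1 hv.map_zero he (degree_lt_degree hud')]
  exact augVal_le_of_isMonicMaximizer hv hmax hkey hlt he hv1 hu hud' _ hg
    (by rw [hud, Nat.div_add_mod']; exact hdeg ▸ hgd)

end AugmentationMaximizers

namespace IsMacLane

variable {vK : K → Qinf} (hK : IsNormDiscreteVal vK)
include hK

theorem isUltrametric {v : K[X] → Qinf} (hv : IsMacLane vK v) : IsUltrametric v := by
  induction hv with
  | gauss => exact gaussVal_isUltrametric hK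
  | @aug v φ lam _ hkey _ ih =>
    rcases Nat.eq_zero_or_pos φ.natDegree with he | he
    · rw [augVal_eq_top_of_natDegree_eq_zero lam hkey.1 ih.map_zero he]
      exact ⟨rfl, fun _ _ => le_top⟩
    · exact isUltrametric_augVal lam hkey.1 ih he

theorem map_one_eq_zero_or_top {v : K[X] → Qinf} (hv : IsMacLane vK v) : v 1 = 0 ∨ v 1 = ⊤ := by
  induction hv with
  | gauss => exact Or.inl (by simpa using gaussVal_X_pow hK 0)
  | @aug v φ lam hv hkey _ ih =>
    rcases Nat.eq_zero_or_pos φ.natDegree with he | he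
    · rw [augVal_eq_top_of_natDegree_eq_zero lam hkey.1 (hv.isUltrametric hK).map_zero he]
      exact Or.inr rfl
    · rwa [augVal_of_degree_lt lam hkey.1 (hv.isUltrametric hK).map_zero he
        (degree_lt_degree (by simpa using he))]

theorem hasMonicMaximizers {v : K[X] → Qinf} (hv : IsMacLane vK v) : HasMonicMaximizers v := by
  induction hv with
  | gauss =>
    exact fun m => ⟨X ^ m, natDegree_X_pow m, monic_X_pow m, fun g hg _ => by
      rw [gaussVal_X_pow hK]; exact gaussVal_le_zero_of_monic hK hg⟩
  | @aug v φ lam hv hkey hlt ih =>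
    have hult := hv.isUltrametric hK
    rcases Nat.eq_zero_or_pos φ.natDegree with he | he
    · rw [augVal_eq_top_of_natDegree_eq_zero lam hkey.1 hult.map_zero he]
      exact fun m => ⟨X ^ m, natDegree_X_pow m, monic_X_pow m, fun _ _ _ => le_rfl⟩
    · have hv1 : v 1 = 0 := (hv.map_one_eq_zero_or_top hK).resolve_right fun h1 =>
        not_top_lt (h1 ▸ (hkey.le_of_natDegree_le hult ih monic_one (by simp)).trans_lt hlt)
      exact hasMonicMaximizers_augVal hult ih hkey hlt he hv1

end IsMacLane

section Representation

variable {vK : K → Qinf} (hK : IsNormDiscreteVal vK) {v : K[X] → Qinf} (hv : IsMacLaneVal vK v)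
include hK hv

section

variable {v' : K[X] → Qinf} {φ : K[X]} {lam : Qinf} (hM : IsMacLane vK v')
  (hkey : IsKeyPoly v' φ) (heq : v = augVal v' φ lam)
include hM hkey heq

lemma natDegree_pos_of_eq_augVal : 0 < φ.natDegree := by
  refine Nat.pos_of_ne_zero fun he => one_ne_zero (hv.2 1 ?_)
  rw [heq, augVal_eq_top_of_natDegree_eq_zero lam hkey.1 (hM.isUltrametric hK).map_zero he]
  rfl

lemma map_one_eq_zero_of_eq_augVal : v' 1 = 0 := by
  have he := natDegree_pos_of_eq_augVal hK hv hM hkey heq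
  have h1 : v 1 = v' 1 := by
    rw [heq, augVal_of_degree_lt lam hkey.1 (hM.isUltrametric hK).map_zero he
      (degree_lt_degree (by simpa using he))]
  exact (hM.map_one_eq_zero_or_top hK).resolve_right fun htop =>
    one_ne_zero (hv.2 1 (h1.trans htop))

lemma map_eq_of_eq_augVal : v φ = lam := by
  have he := natDegree_pos_of_eq_augVal hK hv hM hkey heq
  simpa [heq, map_one_eq_zero_of_eq_augVal hK hv hM hkey heq] using
    augVal_pow_mul lam hkey.1 (hM.isUltrametric hK).map_zero he
      (u := 1) (degree_lt_degree (by simpa using he)) 1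

variable (hlt : v' φ < lam)
include hlt

lemma map_lt_of_eq_augVal {g : K[X]} (hg : g.Monic) (hd : g.natDegree < φ.natDegree) :
    v g < lam := by
  have hult := hM.isUltrametric hK
  rw [heq, augVal_of_degree_lt lam hkey.1 hult.map_zero
    (natDegree_pos_of_eq_augVal hK hv hM hkey heq) (degree_lt_degree hd)]
  exact (hkey.le_of_natDegree_le hult (hM.hasMonicMaximizers hK) hg hd.le).trans_lt hlt

lemma map_le_of_eq_augVal {g : K[X]} (hg : g.Monic) (hd : g.natDegree ≤ φ.natDegree) :
    v g ≤ lam := by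
  have he := natDegree_pos_of_eq_augVal hK hv hM hkey heq
  have hv1 := map_one_eq_zero_of_eq_augVal hK hv hM hkey heq
  simpa [heq, hv1] using augVal_le_of_isMonicMaximizer (hM.isUltrametric hK)
    (hM.hasMonicMaximizers hK) hkey hlt he hv1 (isMonicMaximizer_one v') (by simpa using he) 1 hg
    (by simpa using hd)

end

lemma natDegree_le_of_eq_augVal {v₁ v₂ : K[X] → Qinf} {φ₁ φ₂ : K[X]} {lam₁ lam₂ : Qinf}
    (hM₁ : IsMacLane vK v₁) (hkey₁ : IsKeyPoly v₁ φ₁) (hlt₁ : v₁ φ₁ < lam₁)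
    (heq₁ : v = augVal v₁ φ₁ lam₁) (hM₂ : IsMacLane vK v₂) (hkey₂ : IsKeyPoly v₂ φ₂)
    (hlt₂ : v₂ φ₂ < lam₂) (heq₂ : v = augVal v₂ φ₂ lam₂) : φ₂.natDegree ≤ φ₁.natDegree := by
  by_contra! hdeg
  have he₁ := natDegree_pos_of_eq_augVal hK hv hM₁ hkey₁ heq₁
  have hult₁ := hM₁.isUltrametric hK
  obtain ⟨u, hud, hu⟩ := hM₁.hasMonicMaximizers hK (φ₂.natDegree % φ₁.natDegree)
  have hud' : u.natDegree < φ₁.natDegree := hud ▸ Nat.mod_lt _ he₁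
  set h := φ₁ ^ (φ₂.natDegree / φ₁.natDegree) * u with hh
  have hhd : h.natDegree = φ₂.natDegree := by
    rw [(hkey₁.1.pow _).natDegree_mul hu.1, hkey₁.1.natDegree_pow, hud, Nat.div_add_mod']
  have hvφ₂ := map_eq_of_eq_augVal hK hv hM₂ hkey₂ heq₂
  have hvh : lam₂ ≤ v h := by
    rw [← hvφ₂, heq₁, hh, augVal_pow_mul lam₁ hkey₁.1 hult₁.map_zero he₁ (degree_lt_degree hud')]
    exact augVal_le_of_isMonicMaximizer hult₁ (hM₁.hasMonicMaximizers hK) hkey₁ hlt₁ he₁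
      (map_one_eq_zero_of_eq_augVal hK hv hM₁ hkey₁ heq₁) hu hud' _ hkey₂.1
      (by rw [hud, Nat.div_add_mod'])
  have hsub : lam₂ ≤ v₂ (h - φ₂) := by
    have hlow : v (h - φ₂) = v₂ (h - φ₂) := by
      rw [heq₂, augVal_of_degree_lt lam₂ hkey₂.1 (hM₂.isUltrametric hK).map_zero
        (natDegree_pos_of_eq_augVal hK hv hM₂ hkey₂ heq₂)
        (((hkey₁.1.pow _).mul hu.1).degree_sub_lt hkey₂.1 hhd)]
    rw [← hlow]
    exact (le_min hvh hvφ₂.ge).trans ((hv.1.isUltrametric hK).min_le_map_sub h φ₂)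
  have hdvd := (hM₂.isUltrametric hK).vDvd_of_lt_map_sub (hlt₂.trans_le hsub)
  rcases hkey₂.2.1.vDvd_pow_mul hdvd with hdvd | hdvd
  · exact (hkey₂.2.2 _ hdvd).not_gt hdeg
  · exact (hkey₂.2.2 _ hdvd).not_gt (hud'.trans hdeg)

end Representation

end

theorem val_le_radius_of_degree_le_general
    {K : Type*} [Field K] (vK : K → Qinf)
    (hK : IsNormDiscreteVal vK)
    (v : Polynomial K → Qinf) (hv : IsMacLaneVal vK v)
    (g : Polynomial K) (hmonic : g.Monic) (hconst : 0 < g.natDegree) :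
    ∀ (d : ℕ) (lam : Qinf), HasMLDegree vK v d → HasRadius vK v lam →
      g.natDegree ≤ d → v g ≤ lam ∧ (v g = lam → g.natDegree = d) := by
  rintro d lam hd (⟨rfl, rfl⟩ | ⟨v₂, φ₂, hM₂, hkey₂, hlt₂, heq₂⟩) hgd
  · refine ⟨gaussVal_le_zero_of_monic hK hmonic, fun hg0 => ?_⟩
    rcases hd with ⟨-, rfl⟩ | ⟨v₁, φ₁, lam₁, hM₁, hkey₁, hlt₁, heq₁, rfl⟩
    · omega
    by_contra hne
    have hlt := map_lt_of_eq_augVal hK hv hM₁ hkey₁ heq₁ hlt₁ hmonic (hgd.lt_of_ne hne)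
    have hle := map_eq_of_eq_augVal hK hv hM₁ hkey₁ heq₁ ▸ gaussVal_le_zero_of_monic hK hkey₁.1
    exact (hlt.trans_le hle).ne hg0
  have he₂ := natDegree_pos_of_eq_augVal hK hv hM₂ hkey₂ heq₂
  rcases hd with ⟨-, rfl⟩ | ⟨v₁, φ₁, lam₁, hM₁, hkey₁, hlt₁, heq₁, rfl⟩
  · exact ⟨map_le_of_eq_augVal hK hv hM₂ hkey₂ heq₂ hlt₂ hmonic (by omega), fun _ => by omega⟩
  have hdeg : φ₁.natDegree = φ₂.natDegree :=
    le_antisymm (natDegree_le_of_eq_augVal hK hv hM₂ hkey₂ hlt₂ heq₂ hM₁ hkey₁ hlt₁ heq₁)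
      (natDegree_le_of_eq_augVal hK hv hM₁ hkey₁ hlt₁ heq₁ hM₂ hkey₂ hlt₂ heq₂)
  rw [hdeg] at hgd ⊢
  refine ⟨map_le_of_eq_augVal hK hv hM₂ hkey₂ heq₂ hlt₂ hmonic hgd, fun hg => ?_⟩
  by_contra hne
  exact (map_lt_of_eq_augVal hK hv hM₂ hkey₂ heq₂ hlt₂ hmonic (hgd.lt_of_ne hne)).ne hg

/-- Lemma `lem:v(lowerdegree)`.
Let `v` be a MacLane valuation.  For any monic non-constant `g ∈ K[x]` with
`deg g ≤ deg v` one has `v(g) ≤ λ_v`, with `v(g) = λ_v` only if `deg g = deg v`. -/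
theorem val_le_radius_of_degree_le
    {K : Type*} [Field K] (vK : K → Qinf)
    (hK : IsNormDiscreteVal vK) (hcompl : IsCompleteVal vK)
    (v : Polynomial K → Qinf) (hv : IsMacLaneVal vK v)
    (g : Polynomial K) (hmonic : g.Monic) (hconst : 0 < g.natDegree) :
    ∀ (d : ℕ) (lam : Qinf), HasMLDegree vK v d → HasRadius vK v lam →
      g.natDegree ≤ d → v g ≤ lam ∧ (v g = lam → g.natDegree = d) :=
  val_le_radius_of_degree_le_general vK hK v hv g hmonic hconst
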